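/- arXiv:1901.01585 — 7 statements merged into one kernel-verified Lean document; each statement's English description precedes it below -/
import Mathlib

section
/- For the Slope norm with strictly positive weights λ_1 ≥ ... ≥ λ_p > 0, the dual norm satisfies: max{ β^T z : β ∈ ℝ^p, ‖β‖_S ≤ 1 } = max over k ∈ {1,...,p} of ( Σ_{j=1}^k λ_j )^{-1} · Σ_{j=1}^k |z_{(j)}|, where |z_{(1)}| ≥ ... ≥ |z_{(p)}| is the decreasing rearrangement of |z_i|. -/
/-- The Slope (sorted L1) norm: pair the weights `lam` (assumed decreasing) with the
decreasing rearrangement of the absolute values of the entries of `β`. -/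
noncomputable def slopeNorm {p : ℕ} (lam β : Fin p → ℝ) : ℝ :=
  ∑ j, lam j * |β (Tuple.sort (fun i => -|β i|) j)|

open Finset

/-- Extend a `Fin p`-indexed family to `ℕ` by zero. -/
private noncomputable def ext0 {p : ℕ} (f : Fin p → ℝ) : ℕ → ℝ :=
  fun i => if h : i < p then f ⟨i, h⟩ else 0

private lemma sum_Iic_eq_range {p : ℕ} (f : Fin p → ℝ) (k : Fin p) :
    ∑ j ∈ Finset.Iic k, f j = ∑ i ∈ Finset.range (k.1 + 1), ext0 f i := by
  refine Finset.sum_nbij' (fun (a : Fin p) => (a : ℕ))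
    (fun n => if h : n < p then (⟨n, h⟩ : Fin p) else k) ?_ ?_ ?_ ?_ ?_
  · intro a ha
    simp only [Finset.mem_Iic] at ha
    simp only [Finset.mem_range]
    omega
  · intro n hn
    simp only [Finset.mem_range] at hn
    have hnp : n < p := lt_of_lt_of_le hn k.2
    simp only [dif_pos hnp, Finset.mem_Iic]
    exact Fin.mk_le_of_le_val (by omega)
  · intro a _; simp
  · intro n hn
    simp only [Finset.mem_range] at hn
    have hnp : n < p := lt_of_lt_of_le hn k.2
    simp [dif_pos hnp]
  · intro a _
    simp [ext0, a.2]

private lemma sum_univ_eq_range {p : ℕ} (f : Fin p → ℝ) :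
    ∑ j, f j = ∑ i ∈ Finset.range p, ext0 f i := by
  rw [← Fin.sum_univ_eq_sum_range]
  exact Finset.sum_congr rfl fun j _ => by simp [ext0, j.2]

/-- Abel-summation based inequality: if `a` is antitone and nonnegative and all the
partial sums of `c` are nonpositive, then `∑ a j * c j ≤ 0`. -/
private lemma abel_le {p : ℕ} (a c : Fin p → ℝ) (ha : Antitone a) (ha0 : ∀ j, 0 ≤ a j)
    (hC : ∀ k : Fin p, ∑ j ∈ Finset.Iic k, c j ≤ 0) :
    ∑ j, a j * c j ≤ 0 := by
  rcases Nat.eq_zero_or_pos p with hp | hp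
  · subst hp; simp
  have hA0 : ∀ i, 0 ≤ ext0 a i := by
    intro i; simp only [ext0]; split
    · exact ha0 _
    · exact le_refl 0
  have hAanti : ∀ i, ext0 a (i + 1) ≤ ext0 a i := by
    intro i
    simp only [ext0]
    rcases lt_or_ge (i+1) p with h1 | h1
    · rw [dif_pos h1, dif_pos (by omega : i < p)]
      exact ha (by simp [Fin.le_def])
    · rw [dif_neg (by omega)]
      split
      · exact ha0 _
      · exact le_refl 0
  have hG : ∀ n, 0 < n → n ≤ p → ∑ i ∈ Finset.range n, ext0 c i ≤ 0 := by
    intro n hn hnp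
    have hk : n - 1 < p := by omega
    have := hC ⟨n - 1, hk⟩
    rw [sum_Iic_eq_range] at this
    simpa [show n - 1 + 1 = n by omega] using this
  have h1 : ∑ j, a j * c j = ∑ i ∈ Finset.range p, ext0 a i * ext0 c i := by
    rw [sum_univ_eq_range (fun j => a j * c j)]
    refine Finset.sum_congr rfl fun i hi => ?_
    simp only [Finset.mem_range] at hi
    simp [ext0, dif_pos hi]
  rw [h1]
  have hparts := Finset.sum_range_by_parts (ext0 a) (ext0 c) p
  simp only [smul_eq_mul] at hparts
  rw [hparts]
  have hterm1 : ext0 a (p - 1) * ∑ i ∈ Finset.range p, ext0 c i ≤ 0 :=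
    mul_nonpos_of_nonneg_of_nonpos (hA0 _) (hG p hp le_rfl)
  have hterm2 : 0 ≤ ∑ i ∈ Finset.range (p - 1), (ext0 a (i + 1) - ext0 a i) * ∑ j ∈ Finset.range (i + 1), ext0 c j := by
    refine Finset.sum_nonneg fun i hi => ?_
    simp only [Finset.mem_range] at hi
    have h1 : ext0 a (i + 1) - ext0 a i ≤ 0 := by linarith [hAanti i]
    have h2 : ∑ j ∈ Finset.range (i + 1), ext0 c j ≤ 0 := hG (i + 1) (by omega) (by omega)
    nlinarith
  linarith

private lemma slopeNorm_eq_perm {p : ℕ} (lam β : Fin p → ℝ) (ρ : Equiv.Perm (Fin p))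
    (h : Antitone fun j => |β (ρ j)|) :
    slopeNorm lam β = ∑ j, lam j * |β (ρ j)| := by
  unfold slopeNorm
  have hmono : Monotone ((fun i => -|β i|) ∘ ρ) := fun i j hij => neg_le_neg (h hij)
  have heq := Tuple.comp_sort_eq_comp_iff_monotone.mpr hmono
  refine Finset.sum_congr rfl fun j _ => ?_
  have hj := congrFun heq j
  simp only [Function.comp_apply] at hj
  have : |β (ρ j)| = |β (Tuple.sort (fun i => -|β i|) j)| := by linarith
  rw [this]

theorem stmt4 {p : ℕ} (hp : 0 < p) (lam : Fin p → ℝ) (hlam : Antitone lam)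
    (hpos : ∀ j, 0 < lam j) (z : Fin p → ℝ)
    (σ : Equiv.Perm (Fin p)) (hσ : Antitone fun j => |z (σ j)|) :
    ∃ m : ℝ,
      IsGreatest {t : ℝ | ∃ β : Fin p → ℝ, slopeNorm lam β ≤ 1 ∧ t = ∑ j, β j * z j} m ∧
      IsGreatest {r : ℝ | ∃ k : Fin p,
        r = (∑ j ∈ Finset.Iic k, lam j)⁻¹ * ∑ j ∈ Finset.Iic k, |z (σ j)|} m := by
  classical
  have hne : (Finset.univ : Finset (Fin p)).Nonempty := ⟨⟨0, hp⟩, Finset.mem_univ _⟩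
  set Λ : Fin p → ℝ := fun k => ∑ j ∈ Finset.Iic k, lam j with hΛ
  set Z : Fin p → ℝ := fun k => ∑ j ∈ Finset.Iic k, |z (σ j)| with hZ
  have hΛpos : ∀ k, 0 < Λ k := fun k =>
    Finset.sum_pos (fun j _ => hpos j) ⟨k, Finset.mem_Iic.mpr le_rfl⟩
  have hZ0 : ∀ k, 0 ≤ Z k := fun k => Finset.sum_nonneg fun j _ => abs_nonneg _
  obtain ⟨k0, -, hk0⟩ := Finset.exists_max_image Finset.univ (fun k => (Λ k)⁻¹ * Z k) hne
  set m := (Λ k0)⁻¹ * Z k0 with hm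
  have hub : ∀ k, (Λ k)⁻¹ * Z k ≤ m := fun k => hk0 k (Finset.mem_univ k)
  have hm0 : 0 ≤ m :=
    le_trans (mul_nonneg (inv_nonneg.mpr (hΛpos ⟨0, hp⟩).le) (hZ0 ⟨0, hp⟩)) (hub ⟨0, hp⟩)
  have hZle : ∀ k, Z k ≤ m * Λ k := by
    intro k
    have h2 : Λ k * ((Λ k)⁻¹ * Z k) ≤ Λ k * m := mul_le_mul_of_nonneg_left (hub k) (hΛpos k).le
    rw [← mul_assoc, mul_inv_cancel₀ (hΛpos k).ne', one_mul] at h2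
    linarith
  refine ⟨m, ⟨?_, ?_⟩, ⟨k0, rfl⟩, ?_⟩
  · -- membership in first set: construct optimal β
    set c := (Λ k0)⁻¹ with hc
    have hc0 : 0 ≤ c := inv_nonneg.mpr (hΛpos k0).le
    set β0 : Fin p → ℝ := fun i => if σ.symm i ≤ k0 then c * (if 0 ≤ z i then 1 else -1) else 0
      with hβ0
    have hβσ : ∀ j, β0 (σ j) = if j ≤ k0 then c * (if 0 ≤ z (σ j) then 1 else -1) else 0 := by
      intro j; simp [β0]
    have habs : ∀ j, |β0 (σ j)| = if j ≤ k0 then c else 0 := by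
      intro j; rw [hβσ]
      split_ifs with h h1
      · rw [abs_mul, abs_of_nonneg hc0]; norm_num
      · rw [abs_mul, abs_of_nonneg hc0]; norm_num
      · exact abs_zero
    have hAnti : Antitone fun j => |β0 (σ j)| := by
      intro i j hij
      show |β0 (σ j)| ≤ |β0 (σ i)|
      rw [habs, habs]
      split_ifs with hj hi hi
      · exact le_refl c
      · exact absurd (le_trans hij hj) hi
      · exact hc0
      · exact le_refl 0
    have hnorm : slopeNorm lam β0 = 1 := by
      rw [slopeNorm_eq_perm lam β0 σ hAnti]
      have h1 : ∀ j : Fin p, lam j * |β0 (σ j)| = if j ∈ Finset.Iic k0 then lam j * c else 0 := by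
        intro j; rw [habs]; simp only [Finset.mem_Iic]; split_ifs <;> simp
      calc ∑ j, lam j * |β0 (σ j)| = ∑ j, if j ∈ Finset.Iic k0 then lam j * c else 0 :=
            Finset.sum_congr rfl fun j _ => h1 j
        _ = ∑ j ∈ Finset.Iic k0, lam j * c := by
            rw [Finset.sum_ite_mem, Finset.univ_inter]
        _ = Λ k0 * c := by rw [← Finset.sum_mul]
        _ = 1 := mul_inv_cancel₀ (hΛpos k0).ne'
    have hval : ∑ j, β0 j * z j = m := by
      rw [← Equiv.sum_comp σ (fun j => β0 j * z j)]
      calc ∑ j, β0 (σ j) * z (σ j) = ∑ j, if j ∈ Finset.Iic k0 then c * |z (σ j)| else 0 := by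
            refine Finset.sum_congr rfl fun j _ => ?_
            rw [hβσ]
            simp only [Finset.mem_Iic]
            split_ifs with h hz
            · rw [abs_of_nonneg hz]; ring
            · rw [abs_of_neg (not_le.mp hz)]; ring
            · exact zero_mul _
        _ = ∑ j ∈ Finset.Iic k0, c * |z (σ j)| := by
            rw [Finset.sum_ite_mem, Finset.univ_inter]
        _ = c * Z k0 := by rw [← Finset.mul_sum]
        _ = m := rfl
    exact ⟨β0, hnorm.le, hval.symm⟩
  · -- upper bound of first set
    rintro t ⟨β, hβ, rfl⟩
    set a : Fin p → ℝ := fun j => |β (Tuple.sort (fun i => -|β i|) j)| with ha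
    have hsn : slopeNorm lam β = ∑ j, lam j * a j := rfl
    have haAnti : Antitone a := by
      intro i j hij
      have hmono := Tuple.monotone_sort (fun i => -|β i|) hij
      simp only [Function.comp_apply] at hmono
      simp only [ha]
      linarith
    set b : Fin p → ℝ := fun j => |z (σ j)| with hb
    have hbAnti : Antitone b := hσ
    have hmv : Monovary a b := by
      intro i j hij
      refine haAnti ?_
      by_contra h
      push_neg at h
      exact absurd (hbAnti h.le) (not_le.mpr hij)
    set τ := Tuple.sort (fun i => -|β i|) with hτ
    have step1 : ∑ j, β j * z j ≤ ∑ j, |β j| * |z j| :=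
      Finset.sum_le_sum fun j _ => (le_abs_self _).trans (le_of_eq (abs_mul _ _))
    have step2 : ∑ j, |β j| * |z j| = ∑ j, a j * b ((τ.trans σ.symm) j) := by
      rw [← Equiv.sum_comp τ (fun j => |β j| * |z j|)]
      refine Finset.sum_congr rfl fun j _ => ?_
      simp [ha, hb]
    have step3 : ∑ j, a j * b ((τ.trans σ.symm) j) ≤ ∑ j, a j * b j :=
      hmv.sum_mul_comp_perm_le_sum_mul
    have step4 : ∑ j, a j * b j ≤ m * ∑ j, lam j * a j := by
      have habel := abel_le a (fun j => b j - m * lam j) haAnti (fun j => abs_nonneg _) ?_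
      · have hexp : ∑ j, a j * (b j - m * lam j)
            = ∑ j, a j * b j - m * ∑ j, lam j * a j := by
          rw [Finset.mul_sum, ← Finset.sum_sub_distrib]
          exact Finset.sum_congr rfl fun j _ => by ring
        rw [hexp] at habel
        linarith
      · intro k
        have hexp : ∑ j ∈ Finset.Iic k, (b j - m * lam j) = Z k - m * Λ k := by
          rw [Finset.sum_sub_distrib, ← Finset.mul_sum]
        rw [hexp]
        linarith [hZle k]
    have step5 : m * ∑ j, lam j * a j ≤ m := by
      rw [← hsn]
      calc m * slopeNorm lam β ≤ m * 1 := mul_le_mul_of_nonneg_left hβ hm0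
        _ = m := mul_one m
    linarith
  · -- upper bound of second set
    rintro r ⟨k, rfl⟩
    exact hub k
end

section
/- If λ ≥ λ_max := max_{j ∈ [p]} Σ_{i=1}^n |x_{ij}|, then β* = 0 (with an appropriately chosen intercept β_0*) is an optimal solution of the L1-SVM problem min_{β, β_0} Σ_i (1 − y_i(x_i^T β + β_0))_+ + λ‖β‖_1. -/
theorem stmt9 {n p : ℕ} (x : Fin n → Fin p → ℝ) (y : Fin n → ℝ)
    (hy : ∀ i, y i = 1 ∨ y i = -1)
    (hplus : ∃ i, y i = 1) (hminus : ∃ i, y i = -1)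
    (lam : ℝ) (hlam : ∀ j, ∑ i, |x i j| ≤ lam) :
    ∃ β0 : ℝ, ∀ (β : Fin p → ℝ) (b0 : ℝ),
      ∑ i, max (1 - y i * β0) 0
        ≤ ∑ i, max (1 - y i * (∑ j, x i j * β j + b0)) 0 + lam * ∑ j, |β j| := by
  classical
  set S : Finset (Fin n) := Finset.univ.filter (fun i => y i = 1) with hS
  set np := S.card with hnpdef
  set nm := Sᶜ.card with hnmdef
  have hmemS : ∀ i, i ∈ S ↔ y i = 1 := by intro i; simp [hS]
  have hmemSc : ∀ i, i ∈ Sᶜ → y i = -1 := by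
    intro i hi
    rcases hy i with h | h
    · exact absurd ((hmemS i).mpr h) (Finset.mem_compl.mp hi)
    · exact h
  have hnp : 0 < np := by
    obtain ⟨i, hi⟩ := hplus
    exact Finset.card_pos.mpr ⟨i, (hmemS i).mpr hi⟩
  have hnm : 0 < nm := by
    obtain ⟨i, hi⟩ := hminus
    refine Finset.card_pos.mpr ⟨i, Finset.mem_compl.mpr ?_⟩
    intro h
    rw [hmemS i] at h
    norm_num [h] at hi
  set m := min np nm with hm
  set M : ℝ := (m : ℝ) with hM
  have hM0 : 0 ≤ M := by positivity
  have hnpR : (0:ℝ) < (np:ℝ) := by exact_mod_cast hnp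
  have hnmR : (0:ℝ) < (nm:ℝ) := by exact_mod_cast hnm
  set a : Fin n → ℝ := fun i => if y i = 1 then M / np else M / nm with ha
  have ha0 : ∀ i, 0 ≤ a i := by
    intro i
    by_cases h : y i = 1 <;> simp [ha, h] <;> positivity
  have ha1 : ∀ i, a i ≤ 1 := by
    intro i
    by_cases h : y i = 1 <;> simp only [ha, h, if_true, if_false]
    · rw [div_le_one hnpR, hM]; exact Nat.cast_le.mpr (min_le_left _ _)
    · rw [div_le_one hnmR, hM]; exact Nat.cast_le.mpr (min_le_right _ _)
  -- sums of a over S and Sᶜ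
  have hsumS : ∑ i ∈ S, a i = M := by
    have : ∀ i ∈ S, a i = M / np := by
      intro i hi; simp [ha, (hmemS i).mp hi]
    rw [Finset.sum_congr rfl this, Finset.sum_const, nsmul_eq_mul,
      mul_comm, div_mul_cancel₀ _ (ne_of_gt hnpR)]
  have hsumSc : ∑ i ∈ Sᶜ, a i = M := by
    have : ∀ i ∈ Sᶜ, a i = M / nm := by
      intro i hi
      have h1 : y i ≠ 1 := by rw [hmemSc i hi]; norm_num
      simp [ha, h1]
    rw [Finset.sum_congr rfl this, Finset.sum_const, nsmul_eq_mul,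
      mul_comm, div_mul_cancel₀ _ (ne_of_gt hnmR)]
  have hsum_a : ∑ i, a i = 2 * M := by
    rw [← Finset.sum_add_sum_compl S, hsumS, hsumSc]; ring
  have hsum_ay : ∑ i, a i * y i = 0 := by
    rw [← Finset.sum_add_sum_compl S]
    have h1 : ∑ i ∈ S, a i * y i = M := by
      rw [← hsumS]
      refine Finset.sum_congr rfl fun i hi => ?_
      rw [(hmemS i).mp hi]; ring
    have h2 : ∑ i ∈ Sᶜ, a i * y i = -M := by
      have h3 : ∀ i ∈ Sᶜ, a i * y i = -(a i) := fun i hi => by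
        rw [hmemSc i hi]; ring
      rw [Finset.sum_congr rfl h3, Finset.sum_neg_distrib, hsumSc]
    rw [h1, h2]; ring
  -- key lower bound on the objective
  have key : ∀ (β : Fin p → ℝ) (b0 : ℝ),
      2 * M ≤ ∑ i, max (1 - y i * (∑ j, x i j * β j + b0)) 0 + lam * ∑ j, |β j| := by
    intro β b0
    have step1 : ∑ i, a i * (1 - y i * (∑ j, x i j * β j + b0))
        ≤ ∑ i, max (1 - y i * (∑ j, x i j * β j + b0)) 0 := by
      refine Finset.sum_le_sum fun i _ => ?_
      set s := 1 - y i * (∑ j, x i j * β j + b0)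
      rcases le_or_gt 0 s with hs | hs
      · calc a i * s ≤ 1 * s := mul_le_mul_of_nonneg_right (ha1 i) hs
          _ = s := one_mul s
          _ ≤ max s 0 := le_max_left s 0
      · calc a i * s ≤ 0 := mul_nonpos_of_nonneg_of_nonpos (ha0 i) hs.le
          _ ≤ max s 0 := le_max_right s 0
    have expand : ∑ i, a i * (1 - y i * (∑ j, x i j * β j + b0))
        = 2 * M - ∑ j, (∑ i, a i * y i * x i j) * β j := by
      have : ∀ i, a i * (1 - y i * (∑ j, x i j * β j + b0))
          = a i - (∑ j, a i * y i * x i j * β j) - (a i * y i) * b0 := by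
        intro i
        have hs : ∑ j, a i * y i * x i j * β j = a i * y i * ∑ j, x i j * β j := by
          rw [Finset.mul_sum]; exact Finset.sum_congr rfl fun j _ => by ring
        rw [hs]; ring
      rw [Finset.sum_congr rfl fun i _ => this i]
      rw [Finset.sum_sub_distrib, Finset.sum_sub_distrib, hsum_a,
        ← Finset.sum_mul, hsum_ay, zero_mul, sub_zero, Finset.sum_comm]
      congr 1
      refine Finset.sum_congr rfl fun j _ => ?_
      rw [Finset.sum_mul]
    have bound : ∑ j, (∑ i, a i * y i * x i j) * β j ≤ lam * ∑ j, |β j| := by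
      rw [Finset.mul_sum]
      refine Finset.sum_le_sum fun j _ => ?_
      have hc : |∑ i, a i * y i * x i j| ≤ lam := by
        refine le_trans (Finset.abs_sum_le_sum_abs _ _) (le_trans ?_ (hlam j))
        refine Finset.sum_le_sum fun i _ => ?_
        rw [abs_mul, abs_mul]
        have hyi : |y i| = 1 := by rcases hy i with h | h <;> simp [h]
        rw [hyi, mul_one, abs_of_nonneg (ha0 i)]
        calc a i * |x i j| ≤ 1 * |x i j| :=
              mul_le_mul_of_nonneg_right (ha1 i) (abs_nonneg _)
          _ = |x i j| := one_mul _
      calc (∑ i, a i * y i * x i j) * β j ≤ |(∑ i, a i * y i * x i j) * β j| :=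
            le_abs_self _
        _ = |∑ i, a i * y i * x i j| * |β j| := abs_mul _ _
        _ ≤ lam * |β j| := mul_le_mul_of_nonneg_right hc (abs_nonneg _)
    have := step1
    rw [expand] at this
    linarith
  -- choose the intercept
  refine ⟨if nm ≤ np then 1 else -1, fun β b0 => ?_⟩
  refine le_trans ?_ (key β b0)
  by_cases hcase : nm ≤ np
  · simp only [hcase, if_true]
    have : ∀ i, max (1 - y i * 1) 0 = if y i = 1 then 0 else 2 := by
      intro i
      rcases hy i with h | h <;> simp [h] <;> norm_num
    rw [Finset.sum_congr rfl fun i _ => this i, Finset.sum_ite, Finset.sum_const,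
      Finset.sum_const, smul_zero, zero_add, nsmul_eq_mul]
    have hfil : (Finset.univ.filter (fun i => ¬ y i = 1)) = Sᶜ := by
      ext i; simp [hS, Finset.mem_compl]
    rw [hfil]
    have : M = (nm : ℝ) := by
      rw [hM, hm, min_eq_right hcase]
    rw [this]; linarith
  · simp only [hcase, if_false]
    have : ∀ i, max (1 - y i * (-1)) 0 = if y i = 1 then 2 else 0 := by
      intro i
      rcases hy i with h | h <;> simp [h] <;> norm_num
    rw [Finset.sum_congr rfl fun i _ => this i, Finset.sum_ite, Finset.sum_const,
      Finset.sum_const, smul_zero, add_zero, nsmul_eq_mul]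
    have hfil : (Finset.univ.filter (fun i => y i = 1)) = S := by
      ext i; simp [hS]
    rw [hfil]
    have : M = (np : ℝ) := by
      rw [hM, hm, min_eq_left (le_of_not_ge hcase)]
    rw [this]; linarith
end

section
/- If λ ≥ λ_max := max_{g ∈ [G]} Σ_{j ∈ I_g} Σ_{i=1}^n |x_{ij}|, then β* = 0 (with optimal intercept) solves the Group-SVM problem min_{β, β_0} Σ_i (1 − y_i(x_i^T β + β_0))_+ + λ Σ_{g=1}^G ‖β_g‖_∞. -/
theorem stmt11 {n p G : ℕ} (x : Fin n → Fin p → ℝ) (y : Fin n → ℝ)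
    (hy : ∀ i, y i = 1 ∨ y i = -1)
    (Igrp : Fin G → Finset (Fin p))
    (hne : ∀ g, (Igrp g).Nonempty)
    (hdisj : ∀ g g', g ≠ g' → Disjoint (Igrp g) (Igrp g'))
    (hcover : ∀ j, ∃ g, j ∈ Igrp g)
    (lam : ℝ) (hlam : ∀ g, ∑ j ∈ Igrp g, ∑ i, |x i j| ≤ lam) :
    ∃ β0 : ℝ, ∀ (β : Fin p → ℝ) (b0 : ℝ),
      ∑ i, max (1 - y i * β0) 0
        ≤ ∑ i, max (1 - y i * (∑ j, x i j * β j + b0)) 0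
          + lam * ∑ g, (Igrp g).sup' (hne g) (fun j => |β j|) := by
  classical
  set P : Finset (Fin n) := Finset.univ.filter (fun i => y i = 1) with hP
  set N : Finset (Fin n) := Finset.univ.filter (fun i => ¬ y i = 1) with hN
  -- closed form of the loss for constant prediction b
  have hf : ∀ b : ℝ, ∑ i, max (1 - y i * b) 0
      = (P.card : ℝ) * max (1 - b) 0 + (N.card : ℝ) * max (1 + b) 0 := by
    intro b
    have hPs : ∑ i ∈ P, max (1 - y i * b) 0 = (P.card : ℝ) * max (1 - b) 0 := by
      have h1 : ∀ i ∈ P, max (1 - y i * b) 0 = max (1 - b) 0 := fun i hi => by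
        have : y i = 1 := (Finset.mem_filter.mp hi).2
        rw [this, one_mul]
      rw [Finset.sum_congr rfl h1, Finset.sum_const, nsmul_eq_mul]
    have hNs : ∑ i ∈ N, max (1 - y i * b) 0 = (N.card : ℝ) * max (1 + b) 0 := by
      have h1 : ∀ i ∈ N, max (1 - y i * b) 0 = max (1 + b) 0 := fun i hi => by
        have : y i = -1 := (hy i).resolve_left (Finset.mem_filter.mp hi).2
        rw [this]; congr 1; ring
      rw [Finset.sum_congr rfl h1, Finset.sum_const, nsmul_eq_mul]
    rw [← Finset.sum_filter_add_sum_filter_not Finset.univ (fun i => y i = 1),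
      ← hP, ← hN, hPs, hNs]
  set β0 : ℝ := if (N.card : ℝ) ≤ (P.card : ℝ) then 1 else -1 with hβ0
  refine ⟨β0, fun β b0 => ?_⟩
  set s : Fin n → ℝ := fun i => ∑ j, x i j * β j with hs
  set pen : ℝ := ∑ g, (Igrp g).sup' (hne g) (fun j => |β j|) with hpen
  -- Step A: β0 minimizes the constant loss
  have stepA : ∑ i, max (1 - y i * β0) 0 ≤ ∑ i, max (1 - y i * b0) 0 := by
    rw [hf, hf]
    set m : ℝ := min (P.card : ℝ) (N.card : ℝ) with hm
    have hm0 : 0 ≤ m := le_min (Nat.cast_nonneg _) (Nat.cast_nonneg _)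
    have hlhs : (P.card : ℝ) * max (1 - β0) 0 + (N.card : ℝ) * max (1 + β0) 0
        = 2 * m := by
      rw [hβ0]; split_ifs with h
      · rw [hm, min_eq_right h]; norm_num; ring
      · rw [hm, min_eq_left (le_of_lt (lt_of_not_ge h))]; norm_num; ring
    rw [hlhs]
    have h1 : m * max (1 - b0) 0 ≤ (P.card : ℝ) * max (1 - b0) 0 :=
      mul_le_mul_of_nonneg_right (min_le_left _ _) (le_max_right _ _)
    have h2 : m * max (1 + b0) 0 ≤ (N.card : ℝ) * max (1 + b0) 0 :=
      mul_le_mul_of_nonneg_right (min_le_right _ _) (le_max_right _ _)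
    have h3 : (2 : ℝ) ≤ max (1 - b0) 0 + max (1 + b0) 0 := by
      have := le_max_left (1 - b0) 0
      have := le_max_left (1 + b0) 0
      linarith
    nlinarith [mul_le_mul_of_nonneg_left h3 hm0]
  -- Step B: Lipschitz of hinge
  have stepB : ∀ i, max (1 - y i * b0) 0 ≤ max (1 - y i * (s i + b0)) 0 + |s i| := by
    intro i
    have hyi : |y i| = 1 := by rcases hy i with h | h <;> simp [h]
    refine max_le ?_ (by positivity)
    have h1 : 1 - y i * b0 = (1 - y i * (s i + b0)) + y i * s i := by ring
    have h2 : y i * s i ≤ |s i| := by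
      calc y i * s i ≤ |y i * s i| := le_abs_self _
        _ = |s i| := by rw [abs_mul, hyi, one_mul]
    have h3 : 1 - y i * (s i + b0) ≤ max (1 - y i * (s i + b0)) 0 := le_max_left _ _
    linarith
  -- Step C: bound on sum of |s i|
  have stepC : ∑ i, |s i| ≤ lam * pen := by
    have hswap : ∑ i, |s i| ≤ ∑ j, (∑ i, |x i j|) * |β j| := by
      calc ∑ i, |s i| ≤ ∑ i, ∑ j, |x i j| * |β j| := by
            refine Finset.sum_le_sum fun i _ => ?_
            calc |s i| ≤ ∑ j, |x i j * β j| := Finset.abs_sum_le_sum_abs _ _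
              _ = ∑ j, |x i j| * |β j| := by simp [abs_mul]
        _ = ∑ j, (∑ i, |x i j|) * |β j| := by
            rw [Finset.sum_comm]
            exact Finset.sum_congr rfl fun j _ => (Finset.sum_mul _ _ _).symm
    have huniv : (Finset.univ : Finset (Fin p)) = Finset.univ.biUnion Igrp := by
      ext j
      simp only [Finset.mem_univ, Finset.mem_biUnion, true_iff, true_and]
      exact hcover j
    have hpart : ∑ j, (∑ i, |x i j|) * |β j|
        = ∑ g, ∑ j ∈ Igrp g, (∑ i, |x i j|) * |β j| := by
      rw [huniv]
      exact Finset.sum_biUnion (fun g _ g' _ hgg' => hdisj g g' hgg')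
    have hgrp : ∀ g, ∑ j ∈ Igrp g, (∑ i, |x i j|) * |β j|
        ≤ lam * (Igrp g).sup' (hne g) (fun j => |β j|) := by
      intro g
      set M : ℝ := (Igrp g).sup' (hne g) (fun j => |β j|) with hM
      have hM0 : 0 ≤ M := by
        obtain ⟨j0, hj0⟩ := hne g
        exact le_trans (abs_nonneg (β j0)) (Finset.le_sup' (fun j => |β j|) hj0)
      calc ∑ j ∈ Igrp g, (∑ i, |x i j|) * |β j|
          ≤ ∑ j ∈ Igrp g, (∑ i, |x i j|) * M := by
            refine Finset.sum_le_sum fun j hj => ?_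
            exact mul_le_mul_of_nonneg_left (Finset.le_sup' (fun j => |β j|) hj)
              (Finset.sum_nonneg fun i _ => abs_nonneg _)
        _ = (∑ j ∈ Igrp g, ∑ i, |x i j|) * M := (Finset.sum_mul _ _ _).symm
        _ ≤ lam * M := mul_le_mul_of_nonneg_right (hlam g) hM0
    calc ∑ i, |s i| ≤ ∑ j, (∑ i, |x i j|) * |β j| := hswap
      _ = ∑ g, ∑ j ∈ Igrp g, (∑ i, |x i j|) * |β j| := hpart
      _ ≤ ∑ g, lam * (Igrp g).sup' (hne g) (fun j => |β j|) :=
          Finset.sum_le_sum fun g _ => hgrp g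
      _ = lam * pen := (Finset.mul_sum _ _ _).symm
  calc ∑ i, max (1 - y i * β0) 0
      ≤ ∑ i, max (1 - y i * b0) 0 := stepA
    _ ≤ ∑ i, (max (1 - y i * (s i + b0)) 0 + |s i|) :=
        Finset.sum_le_sum fun i _ => stepB i
    _ = ∑ i, max (1 - y i * (s i + b0)) 0 + ∑ i, |s i| := Finset.sum_add_distrib
    _ ≤ ∑ i, max (1 - y i * (s i + b0)) 0 + lam * pen := by linarith [stepC]
end

section
/- Nesterov smoothing of the hinge loss: for τ > 0 define F^τ(β, β_0) = max_{‖w‖_∞ ≤ 1} { Σ_i (1/2)[z_i + w_i z_i] − (τ/2)‖w‖_2^2 } with z_i = 1 − y_i(x_i^T β + β_0). Then the maximum is attained at w_i^τ = min(1, |z_i|/(2τ)) sign(z_i), and F^τ satisfies H(β,β_0) − (nτ/2) ≤ F^τ(β, β_0) ≤ H(β, β_0), where H is the hinge loss Σ_i (z_i)_+. -/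
lemma key13 (τ z v w : ℝ) (hτ : 0 < τ) (hv : |v| ≤ 1)
    (hw : w = min 1 (|z| / (2 * τ)) * Real.sign z) :
    ((z + v * z) / 2 - τ / 2 * v ^ 2 ≤ (z + w * z) / 2 - τ / 2 * w ^ 2) ∧
    (max z 0 - τ / 2 ≤ (z + w * z) / 2 - τ / 2 * w ^ 2) ∧
    ((z + w * z) / 2 - τ / 2 * w ^ 2 ≤ max z 0) := by
  obtain ⟨hv1, hv2⟩ := abs_le.mp hv
  have h2τ : (0:ℝ) < 2 * τ := by linarith
  rcases le_total (|z|) (2 * τ) with hle | hge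
  · have hwz : w = z / (2 * τ) := by
      rw [hw, min_eq_right ((div_le_one h2τ).mpr hle)]
      rcases lt_trichotomy z 0 with h | h | h
      · rw [Real.sign_of_neg h, abs_of_neg h]; ring
      · simp [h]
      · rw [Real.sign_of_pos h, abs_of_pos h]; ring
    have hz2 : z = 2 * τ * w := by rw [hwz]; field_simp
    have hwb : |w| ≤ 1 := by
      rw [hwz, abs_div, abs_of_pos h2τ]
      exact (div_le_one h2τ).mpr hle
    obtain ⟨hw1, hw2⟩ := abs_le.mp hwb
    refine ⟨?_, ?_, ?_⟩
    · nlinarith [mul_nonneg hτ.le (sq_nonneg (w - v))]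
    · rcases le_total z 0 with h0 | h0
      · rw [max_eq_right h0]
        nlinarith [mul_nonneg hτ.le (sq_nonneg (1 + w))]
      · rw [max_eq_left h0]
        nlinarith [mul_nonneg hτ.le (sq_nonneg (1 - w))]
    · rcases le_total z 0 with h0 | h0
      · rw [max_eq_right h0]
        nlinarith [mul_nonneg (by nlinarith : (0:ℝ) ≤ -z) (by linarith : (0:ℝ) ≤ 1 + w)]
      · rw [max_eq_left h0]
        nlinarith [mul_nonneg h0 (by linarith : (0:ℝ) ≤ 1 - w)]
  · rcases lt_trichotomy z 0 with h | h | h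
    · have habs : |z| = -z := abs_of_neg h
      have hwz : w = -1 := by
        rw [hw, Real.sign_of_neg h, min_eq_left (by rw [habs]; exact (one_le_div h2τ).mpr (habs ▸ hge))]
        ring
      subst hwz
      rw [max_eq_right h.le]
      refine ⟨?_, by nlinarith, by nlinarith⟩
      nlinarith [mul_nonneg (by rw [habs] at hge; linarith : (0:ℝ) ≤ -z - 2 * τ)
          (by linarith : (0:ℝ) ≤ 1 + v), mul_nonneg hτ.le (sq_nonneg (1 + v))]
    · exfalso; rw [h] at hge; simp at hge; linarith
    · have habs : |z| = z := abs_of_pos h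
      have hwz : w = 1 := by
        rw [hw, Real.sign_of_pos h, min_eq_left ((one_le_div h2τ).mpr (habs ▸ hge))]
        ring
      subst hwz
      rw [max_eq_left h.le]
      refine ⟨?_, by nlinarith, by nlinarith⟩
      nlinarith [mul_nonneg (by rw [habs] at hge; linarith : (0:ℝ) ≤ z - 2 * τ)
          (by linarith : (0:ℝ) ≤ 1 - v), mul_nonneg hτ.le (sq_nonneg (1 - v))]

theorem stmt13 {n p : ℕ} (x : Fin n → Fin p → ℝ) (y : Fin n → ℝ)
    (τ : ℝ) (hτ : 0 < τ) (β : Fin p → ℝ) (β0 : ℝ)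
    (z : Fin n → ℝ) (hz : ∀ i, z i = 1 - y i * (∑ j, x i j * β j + β0))
    (w : Fin n → ℝ) (hw : ∀ i, w i = min 1 (|z i| / (2 * τ)) * Real.sign (z i)) :
    IsGreatest {s : ℝ | ∃ v : Fin n → ℝ, (∀ i, |v i| ≤ 1) ∧
        s = ∑ i, (z i + v i * z i) / 2 - τ / 2 * ∑ i, (v i) ^ 2}
      (∑ i, (z i + w i * z i) / 2 - τ / 2 * ∑ i, (w i) ^ 2) ∧
    (∑ i, max (z i) 0) - n * τ / 2
      ≤ ∑ i, (z i + w i * z i) / 2 - τ / 2 * ∑ i, (w i) ^ 2 ∧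
    ∑ i, (z i + w i * z i) / 2 - τ / 2 * ∑ i, (w i) ^ 2 ≤ ∑ i, max (z i) 0 := by
  have hkey := fun i => key13 τ (z i) 0 (w i) hτ (by simp) (hw i)
  have hsum : ∀ v : Fin n → ℝ,
      ∑ i, (z i + v i * z i) / 2 - τ / 2 * ∑ i, (v i) ^ 2
        = ∑ i, ((z i + v i * z i) / 2 - τ / 2 * (v i) ^ 2) := by
    intro v; rw [Finset.mul_sum, ← Finset.sum_sub_distrib]
  have hwb : ∀ i, |w i| ≤ 1 := by
    intro i
    rw [hw i, abs_mul]
    have h1 : |min 1 (|z i| / (2 * τ))| ≤ 1 := by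
      rw [abs_of_nonneg (le_min one_pos.le (div_nonneg (abs_nonneg _) (by linarith)))]
      exact min_le_left _ _
    have h2 : |Real.sign (z i)| ≤ 1 := by
      rcases lt_trichotomy (z i) 0 with h | h | h
      · rw [Real.sign_of_neg h]; norm_num
      · rw [h, Real.sign_zero]; norm_num
      · rw [Real.sign_of_pos h]; norm_num
    calc |min 1 (|z i| / (2 * τ))| * |Real.sign (z i)|
        ≤ 1 * 1 := mul_le_mul h1 h2 (abs_nonneg _) zero_le_one
      _ = 1 := by ring
  refine ⟨⟨⟨w, hwb, rfl⟩, ?_⟩, ?_, ?_⟩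
  · rintro s ⟨v, hv, rfl⟩
    rw [hsum v, hsum w]
    exact Finset.sum_le_sum fun i _ =>
      (key13 τ (z i) (v i) (w i) hτ (hv i) (hw i)).1
  · rw [hsum w]
    have hn : (n : ℝ) * τ / 2 = ∑ _i : Fin n, τ / 2 := by
      rw [Finset.sum_const, Finset.card_fin, nsmul_eq_mul]; ring
    rw [hn, ← Finset.sum_sub_distrib]
    exact Finset.sum_le_sum fun i _ => (hkey i).2.1
  · rw [hsum w]
    exact Finset.sum_le_sum fun i _ => (hkey i).2.2
end

section
/- At an optimal solution β̂ of the Slope proximal problem min_β (1/2)‖β − η‖_2^2 + μ Σ_j λ_j |β_{(j)}|, each coordinate β̂_j satisfies β̂_j η_j ≥ 0, i.e., the signs of β̂_j and η_j agree (or β̂_j = 0). -/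
theorem stmt16 {p : ℕ} (lam : Fin p → ℝ) (hlam : Antitone lam) (hpos : ∀ j, 0 ≤ lam j)
    (η : Fin p → ℝ) (μ : ℝ) (hμ : 0 < μ) (b : Fin p → ℝ)
    (hb : ∀ v : Fin p → ℝ,
      (1/2) * ∑ i, (b i - η i) ^ 2 + μ * slopeNorm lam b
        ≤ (1/2) * ∑ i, (v i - η i) ^ 2 + μ * slopeNorm lam v) :
    ∀ j, 0 ≤ b j * η j := by
  intro j
  by_contra h
  push_neg at h
  set v : Fin p → ℝ := Function.update b j (-(b j)) with hv
  have habs : ∀ i, |v i| = |b i| := by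
    intro i
    by_cases hi : i = j
    · subst hi; simp [hv, Function.update_self, abs_neg]
    · simp [hv, Function.update_of_ne hi]
  have hsn : slopeNorm lam v = slopeNorm lam b := by
    unfold slopeNorm
    have hf : (fun i => -|v i|) = (fun i => -|b i|) := by
      funext i; rw [habs]
    rw [hf]
    exact Finset.sum_congr rfl (fun k _ => by rw [habs])
  have hsum : ∑ i, (v i - η i) ^ 2 = ∑ i, (b i - η i) ^ 2 + 4 * (b j * η j) := by
    have hdiff : ∑ i, ((v i - η i) ^ 2 - (b i - η i) ^ 2) = 4 * (b j * η j) := by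
      rw [Finset.sum_eq_single j]
      · simp [hv, Function.update_self]; ring
      · intro i _ hi
        simp [hv, Function.update_of_ne hi]
      · simp
    have := Finset.sum_sub_distrib (f := fun i => (v i - η i) ^ 2)
      (g := fun i => (b i - η i) ^ 2) (s := Finset.univ)
    linarith [hdiff, this.symm]
  have hkey := hb v
  rw [hsn, hsum] at hkey
  linarith
end

section
/- If η̃ ∈ ℝ^p is the decreasing rearrangement of |η| (η̃_1 ≥ ... ≥ η̃_p ≥ 0) and û solves min_u (1/2)‖u − η̃‖_2^2 + μ Σ_j λ_j u_j subject to u_1 ≥ ... ≥ u_p ≥ 0, then the vector β̂ obtained by setting |β̂_{(i)}| = û_i (matching the sorting permutation of |η| and the signs of η) solves the Slope proximal problem min_β (1/2)‖β − η‖_2^2 + μ Σ_j λ_j |β_{(j)}|. -/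
theorem stmt17 {p : ℕ} (lam : Fin p → ℝ) (hlam : Antitone lam) (hpos : ∀ j, 0 ≤ lam j)
    (η : Fin p → ℝ) (μ : ℝ) (hμ : 0 < μ)
    (σ : Equiv.Perm (Fin p)) (hσ : Antitone fun i => |η (σ i)|)
    (u : Fin p → ℝ) (hu1 : Antitone u) (hu2 : ∀ i, 0 ≤ u i)
    (hu : ∀ v : Fin p → ℝ, Antitone v → (∀ i, 0 ≤ v i) →
      (1/2) * ∑ i, (u i - |η (σ i)|) ^ 2 + μ * ∑ i, lam i * u i
        ≤ (1/2) * ∑ i, (v i - |η (σ i)|) ^ 2 + μ * ∑ i, lam i * v i)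
    (βhat : Fin p → ℝ)
    (hβ : ∀ j, βhat j = (if η j < 0 then -1 else 1) * u (σ.symm j)) :
    ∀ v : Fin p → ℝ,
      (1/2) * ∑ i, (βhat i - η i) ^ 2 + μ * slopeNorm lam βhat
        ≤ (1/2) * ∑ i, (v i - η i) ^ 2 + μ * slopeNorm lam v := by
  intro v
  -- abbreviations
  set a : Fin p → ℝ := fun i => |η (σ i)| with ha
  -- Step 1: the quadratic part of βhat matches that of u.
  have habs : ∀ i, |βhat (σ i)| = u i := by
    intro i
    rw [hβ (σ i), Equiv.symm_apply_apply]
    rcases lt_or_ge (η (σ i)) 0 with h | h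
    · simp [h, abs_of_nonneg (hu2 i)]
    · simp [not_lt.mpr h, abs_of_nonneg (hu2 i)]
  have hsq1 : ∑ i, (βhat i - η i) ^ 2 = ∑ i, (u i - a i) ^ 2 := by
    rw [← Equiv.sum_comp σ (fun i => (βhat i - η i) ^ 2)]
    refine Finset.sum_congr rfl fun i _ => ?_
    have hb := hβ (σ i)
    rw [Equiv.symm_apply_apply] at hb
    show (βhat (σ i) - η (σ i)) ^ 2 = (u i - a i) ^ 2
    rcases lt_or_ge (η (σ i)) 0 with h | h
    · have he : η (σ i) = -|η (σ i)| := by rw [abs_of_neg h]; ring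
      rw [hb, if_pos h, ha]; rw [he]; ring
    · have he : η (σ i) = |η (σ i)| := (abs_of_nonneg h).symm
      rw [hb, if_neg (not_lt.mpr h), ha]; rw [he]; ring
  -- Step 2: slopeNorm of βhat equals ∑ lam i * u i.
  have hslope1 : slopeNorm lam βhat = ∑ i, lam i * u i := by
    unfold slopeNorm
    have hmono : Monotone ((fun i => -|βhat i|) ∘ σ) := by
      intro i j hij
      simp only [Function.comp_apply, habs]
      exact neg_le_neg (hu1 hij)
    have := (Tuple.comp_sort_eq_comp_iff_monotone (f := fun i => -|βhat i|)
      (σ := σ)).mpr hmono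
    refine Finset.sum_congr rfl fun j _ => ?_
    have hj := congrFun this j
    simp only [Function.comp_apply, neg_inj] at hj
    rw [← hj, habs]
  -- Step 3: the arbitrary v versus its decreasing rearrangement w.
  set τ : Equiv.Perm (Fin p) := Tuple.sort (fun i => -|v i|) with hτ
  set w : Fin p → ℝ := fun j => |v (τ j)| with hw
  have hwmono : Antitone w := by
    intro i j hij
    have := Tuple.monotone_sort (fun i => -|v i|) hij
    simpa [hw, hτ] using this
  have hwpos : ∀ i, 0 ≤ w i := fun i => abs_nonneg _
  have hslope2 : slopeNorm lam v = ∑ i, lam i * w i := rfl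
  -- rearrangement inequality: ∑ v η ≤ ∑ a w
  have hcross : ∑ i, v i * η i ≤ ∑ i, a i * w i := by
    have h1 : ∑ i, v i * η i ≤ ∑ i, |v i| * |η i| := by
      refine Finset.sum_le_sum fun i _ => ?_
      calc v i * η i ≤ |v i * η i| := le_abs_self _
        _ = |v i| * |η i| := abs_mul _ _
    have hmv : Monovary a w := by
      intro i j hij
      rcases le_total i j with h | h
      · exact absurd (hwmono h) (not_le.mpr hij)
      · exact hσ h
    have h2 := hmv.sum_smul_comp_perm_le_sum_smul (σ := σ.trans τ.symm)
    have h3 : ∑ i, |v i| * |η i| = ∑ i, a i • w ((σ.trans τ.symm) i) := by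
      rw [← Equiv.sum_comp σ (fun i => |v i| * |η i|)]
      refine Finset.sum_congr rfl fun i _ => ?_
      simp [ha, hw, mul_comm, smul_eq_mul]
    calc ∑ i, v i * η i ≤ ∑ i, |v i| * |η i| := h1
      _ = ∑ i, a i • w ((σ.trans τ.symm) i) := h3
      _ ≤ ∑ i, a i • w i := h2
      _ = ∑ i, a i * w i := by simp [smul_eq_mul]
  -- quadratic comparison
  have hsq2 : ∑ i, (w i - a i) ^ 2 ≤ ∑ i, (v i - η i) ^ 2 := by
    have hvw : ∑ i, (v i) ^ 2 = ∑ i, (w i) ^ 2 := by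
      rw [← Equiv.sum_comp τ (fun i => (v i) ^ 2)]
      exact Finset.sum_congr rfl fun i _ => by simp [hw, ← sq_abs]
    have hηa : ∑ i, (η i) ^ 2 = ∑ i, (a i) ^ 2 := by
      rw [← Equiv.sum_comp σ (fun i => (η i) ^ 2)]
      exact Finset.sum_congr rfl fun i _ => by simp [ha, ← sq_abs]
    have expand1 : ∑ i, (v i - η i) ^ 2
        = ∑ i, (v i) ^ 2 - 2 * ∑ i, v i * η i + ∑ i, (η i) ^ 2 := by
      have h : ∀ i : Fin p, (v i - η i) ^ 2
          = v i ^ 2 - 2 * (v i * η i) + η i ^ 2 := fun i => by ring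
      simp only [h, Finset.sum_add_distrib, Finset.sum_sub_distrib, ← Finset.mul_sum]
    have expand2 : ∑ i, (w i - a i) ^ 2
        = ∑ i, (w i) ^ 2 - 2 * ∑ i, a i * w i + ∑ i, (a i) ^ 2 := by
      have h : ∀ i : Fin p, (w i - a i) ^ 2
          = w i ^ 2 - 2 * (a i * w i) + a i ^ 2 := fun i => by ring
      simp only [h, Finset.sum_add_distrib, Finset.sum_sub_distrib, ← Finset.mul_sum]
    rw [expand1, expand2, hvw, hηa]
    linarith
  -- assemble
  have key := hu w hwmono hwpos
  rw [hsq1, hslope1, hslope2]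
  have h2 : μ * ∑ i, lam i * w i = μ * ∑ i, lam i * w i := rfl
  nlinarith [key, hsq2, hμ.le]
end

section
/- The gradient of the smoothed hinge loss F^τ(β, β_0), given by ∇F^τ(β, β_0) = −(1/2) Σ_{i=1}^n (1 + w_i^τ) y_i x̃_i with x̃_i = (x_i, 1) and w_i^τ = min(1, |z_i|/(2τ)) sign(z_i), z_i = 1 − y_i(x̃_i^T(β,β_0)), is Lipschitz continuous with constant C^τ = σ_max(X̃^T X̃)/(4τ), where X̃ is the n×(p+1) matrix with rows x̃_i and σ_max denotes the largest eigenvalue. -/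
/-!
With `z = 1 - y ⊙ X̃b`, the gradient is `-½ X̃ᵀ((1 + w^τ(z)) ⊙ y)`, and the weight
`w^τ(z) = min(1, |z|/(2τ)) sign z` is the clamp of `z/(2τ)` to `[-1, 1]`, hence `(2τ)⁻¹`-Lipschitz
in each coordinate. As `|y_i| = 1`, the difference of two gradients is `-½ X̃ᵀ d` with
`|d_i| ≤ |(X̃(b - b'))_i| / (2τ)`, so in the L2 operator norm
`‖∇F(b) - ∇F(b')‖ ≤ ½ ‖X̃ᵀ‖ (2τ)⁻¹ ‖X̃‖ ‖b - b'‖ = ‖X̃‖²/(4τ) ‖b - b'‖`.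
Finally `‖X̃‖² ≤ λ_max(X̃ᵀX̃)`, because `X̃ᵀX̃ ≤ λ_max • 1` in the Loewner order.
-/

open Matrix WithLp
open scoped Matrix.Norms.L2Operator MatrixOrder

section

variable {m n : Type*} [Fintype m] [Fintype n]

lemma EuclideanSpace.norm_toLp_sq (v : n → ℝ) : ‖toLp 2 v‖ ^ 2 = v ⬝ᵥ v := by
  rw [EuclideanSpace.norm_sq_eq]
  simp [dotProduct, sq]

lemma EuclideanSpace.norm_toLp_le_of_abs_le {v w : n → ℝ} (h : ∀ i, |v i| ≤ |w i|) :
    ‖toLp 2 v‖ ≤ ‖toLp 2 w‖ := by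
  rw [EuclideanSpace.norm_eq, EuclideanSpace.norm_eq]
  gcongr with i
  exact h i

theorem Matrix.IsHermitian.dotProduct_mulVec_le_iSup_eigenvalues [DecidableEq n]
    {A : Matrix n n ℝ} (hA : A.IsHermitian) (w : n → ℝ) :
    w ⬝ᵥ A *ᵥ w ≤ (⨆ k, hA.eigenvalues k) * (w ⬝ᵥ w) := by
  have hle : A ≤ algebraMap ℝ _ (⨆ k, hA.eigenvalues k) := by
    refine le_algebraMap_of_spectrum_le (fun x hx => ?_) hA.isSelfAdjoint
    rw [hA.spectrum_real_eq_range_eigenvalues] at hx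
    obtain ⟨k, rfl⟩ := hx
    exact le_ciSup (Set.finite_range _).bddAbove k
  simpa [sub_mulVec, dotProduct_sub, Algebra.algebraMap_eq_smul_one, smul_mulVec,
    dotProduct_smul] using (le_iff.mp hle).dotProduct_mulVec_nonneg w

theorem Matrix.l2_opNorm_sq_le_iSup_eigenvalues [DecidableEq n] (X : Matrix m n ℝ) :
    ‖X‖ ^ 2 ≤ ⨆ k, (isHermitian_conjTranspose_mul_self X).eigenvalues k := by
  set c := ⨆ k, (isHermitian_conjTranspose_mul_self X).eigenvalues k
  have hc : 0 ≤ c := Real.iSup_nonneg (posSemidef_conjTranspose_mul_self X).eigenvalues_nonneg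
  suffices ‖X‖ ≤ √c from (Real.le_sqrt (norm_nonneg X) hc).mp this
  refine ContinuousLinearMap.opNorm_le_bound _ (Real.sqrt_nonneg c) fun w => ?_
  rw [← Real.sqrt_sq (norm_nonneg w), ← Real.sqrt_mul hc,
    Real.le_sqrt (norm_nonneg _) (by positivity)]
  calc ‖toLp 2 (X *ᵥ w.ofLp)‖ ^ 2 = w.ofLp ⬝ᵥ (Xᴴ * X) *ᵥ w.ofLp := by
        rw [EuclideanSpace.norm_toLp_sq, ← mulVec_mulVec, dotProduct_mulVec w.ofLp,
          conjTranspose_eq_transpose_of_trivial, vecMul_transpose]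
    _ ≤ c * (w.ofLp ⬝ᵥ w.ofLp) :=
        (isHermitian_conjTranspose_mul_self X).dotProduct_mulVec_le_iSup_eigenvalues _
    _ = c * ‖w‖ ^ 2 := by rw [← EuclideanSpace.norm_toLp_sq, toLp_ofLp]

noncomputable def smoothHingeWeight (τ z : ℝ) : ℝ := min 1 (|z| / (2 * τ)) * Real.sign z

lemma smoothHingeWeight_eq_clamp {τ : ℝ} (hτ : 0 < τ) (z : ℝ) :
    smoothHingeWeight τ z = max (-1) (min 1 (z / (2 * τ))) := by
  have h2τ : 0 < 2 * τ := by positivity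
  rcases lt_trichotomy z 0 with hz | rfl | hz
  · have hneg : z / (2 * τ) < 0 := div_neg_of_neg_of_pos hz h2τ
    rw [smoothHingeWeight, Real.sign_of_neg hz, abs_of_neg hz,
      min_eq_right (hneg.le.trans zero_le_one : z / (2 * τ) ≤ 1), mul_neg_one, neg_div,
      ← max_neg_neg, neg_neg]
  · simp [smoothHingeWeight]
  · have hpos : 0 < z / (2 * τ) := div_pos hz h2τ
    rw [smoothHingeWeight, Real.sign_of_pos hz, abs_of_pos hz, mul_one,
      max_eq_right (le_min (by norm_num) (by linarith))]

lemma abs_smoothHingeWeight_sub_le {τ : ℝ} (hτ : 0 < τ) (s t : ℝ) :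
    |smoothHingeWeight τ s - smoothHingeWeight τ t| ≤ |s - t| / (2 * τ) := by
  rw [smoothHingeWeight_eq_clamp hτ, smoothHingeWeight_eq_clamp hτ, max_comm (-1 : ℝ),
    max_comm (-1 : ℝ)]
  calc _ ≤ |min 1 (s / (2 * τ)) - min 1 (t / (2 * τ))| := abs_max_sub_max_le_abs _ _ _
    _ ≤ |s / (2 * τ) - t / (2 * τ)| := (abs_min_sub_min_le_max _ _ _ _).trans (by simp)
    _ = |s - t| / (2 * τ) := by rw [← sub_div, abs_div, abs_of_pos (by positivity : 0 < 2 * τ)]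

noncomputable def smoothHingeGrad (X : Matrix m n ℝ) (y : m → ℝ) (τ : ℝ) (b : n → ℝ) : n → ℝ :=
  -(1 / 2 : ℝ) • ((fun i => (1 + smoothHingeWeight τ (1 - y i * (X *ᵥ b) i)) * y i) ᵥ* X)

theorem norm_smoothHingeGrad_sub_le [DecidableEq m] [DecidableEq n] (X : Matrix m n ℝ)
    {y : m → ℝ} (hy : ∀ i, |y i| = 1) {τ : ℝ} (hτ : 0 < τ) (b b' : n → ℝ) :
    ‖toLp 2 (smoothHingeGrad X y τ b - smoothHingeGrad X y τ b')‖
      ≤ ‖X‖ ^ 2 / (4 * τ) * ‖toLp 2 (b - b')‖ := by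
  set d : m → ℝ := fun i => (smoothHingeWeight τ (1 - y i * (X *ᵥ b) i)
    - smoothHingeWeight τ (1 - y i * (X *ᵥ b') i)) * y i
  have hgrad :
      smoothHingeGrad X y τ b - smoothHingeGrad X y τ b' = -(1 / 2 : ℝ) • (Xᵀ *ᵥ d) := by
    rw [smoothHingeGrad, smoothHingeGrad, ← smul_sub, ← sub_vecMul, mulVec_transpose]
    congr 2
    ext i
    simp only [Pi.sub_apply, d]
    ring
  have hd : ∀ i, |d i| ≤ |((2 * τ)⁻¹ • (X *ᵥ (b - b'))) i| := by
    intro i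
    calc |d i| = |smoothHingeWeight τ (1 - y i * (X *ᵥ b) i)
          - smoothHingeWeight τ (1 - y i * (X *ᵥ b') i)| := by rw [abs_mul, hy, mul_one]
      _ ≤ |(1 - y i * (X *ᵥ b) i) - (1 - y i * (X *ᵥ b') i)| / (2 * τ) :=
          abs_smoothHingeWeight_sub_le hτ _ _
      _ = |((2 * τ)⁻¹ • (X *ᵥ (b - b'))) i| := by
          rw [mulVec_sub, Pi.smul_apply, Pi.sub_apply, smul_eq_mul, abs_mul, abs_inv,
            abs_of_pos (by positivity : 0 < 2 * τ), inv_mul_eq_div,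
            show ∀ s t : ℝ, (1 - y i * s) - (1 - y i * t) = -(y i * (s - t)) by intros; ring,
            abs_neg, abs_mul, hy, one_mul]
  calc ‖toLp 2 (smoothHingeGrad X y τ b - smoothHingeGrad X y τ b')‖
      = 1 / 2 * ‖toLp 2 (Xᵀ *ᵥ d)‖ := by
        rw [hgrad, toLp_smul, norm_smul]
        norm_num
    _ ≤ 1 / 2 * (‖X‖ * ‖toLp 2 ((2 * τ)⁻¹ • (X *ᵥ (b - b')))‖) := by
        gcongr
        calc ‖toLp 2 (Xᵀ *ᵥ d)‖ ≤ ‖Xᵀ‖ * ‖toLp 2 d‖ := l2_opNorm_mulVec Xᵀ (toLp 2 d)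
          _ ≤ ‖X‖ * ‖toLp 2 ((2 * τ)⁻¹ • (X *ᵥ (b - b')))‖ := by
            rw [← conjTranspose_eq_transpose_of_trivial, l2_opNorm_conjTranspose]
            gcongr
            exact EuclideanSpace.norm_toLp_le_of_abs_le hd
    _ ≤ 1 / 2 * (‖X‖ * ((2 * τ)⁻¹ * (‖X‖ * ‖toLp 2 (b - b')‖))) := by
        rw [toLp_smul, norm_smul, Real.norm_of_nonneg (by positivity)]
        gcongr
        exact l2_opNorm_mulVec X (toLp 2 (b - b'))
    _ = ‖X‖ ^ 2 / (4 * τ) * ‖toLp 2 (b - b')‖ := by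
        field_simp
        ring

end

lemma EuclideanSpace.norm_toLp_eq_sqrt_castSucc_last {p : ℕ} (v : Fin (p + 1) → ℝ) :
    ‖toLp 2 v‖ = √(∑ j : Fin p, v j.castSucc ^ 2 + v (Fin.last p) ^ 2) := by
  simp [EuclideanSpace.norm_eq, Fin.sum_univ_castSucc]

theorem stmt19 {n p : ℕ} (x : Fin n → Fin p → ℝ) (y : Fin n → ℝ)
    (hy : ∀ i, y i = 1 ∨ y i = -1)
    (τ : ℝ) (hτ : 0 < τ)
    (Xt : Matrix (Fin n) (Fin (p + 1)) ℝ)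
    (hXt : ∀ i (k : Fin (p + 1)), Xt i k = if h : (k : ℕ) < p then x i ⟨k, h⟩ else 1)
    (σmax : ℝ)
    (hσ : σmax = ⨆ k, (Matrix.isHermitian_conjTranspose_mul_self Xt).eigenvalues k)
    (grad : (Fin p → ℝ) × ℝ → (Fin p → ℝ) × ℝ)
    (hgrad : ∀ (β : Fin p → ℝ) (β0 : ℝ), grad (β, β0) =
      (fun j => -(1/2) * ∑ i,
        (1 + min 1 (|1 - y i * (∑ j', x i j' * β j' + β0)| / (2 * τ))
            * Real.sign (1 - y i * (∑ j', x i j' * β j' + β0))) * y i * x i j,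
       -(1/2) * ∑ i,
        (1 + min 1 (|1 - y i * (∑ j', x i j' * β j' + β0)| / (2 * τ))
            * Real.sign (1 - y i * (∑ j', x i j' * β j' + β0))) * y i)) :
    ∀ (β : Fin p → ℝ) (β0 : ℝ) (β' : Fin p → ℝ) (β0' : ℝ),
      Real.sqrt (∑ j, ((grad (β, β0)).1 j - (grad (β', β0')).1 j) ^ 2
          + ((grad (β, β0)).2 - (grad (β', β0')).2) ^ 2)
        ≤ (σmax / (4 * τ))
          * Real.sqrt (∑ j, (β j - β' j) ^ 2 + (β0 - β0') ^ 2) := by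
  intro β β0 β' β0'
  have hcol : ∀ i (j : Fin p), Xt i j.castSucc = x i j := fun i j => by simp [hXt]
  have hlast : ∀ i, Xt i (Fin.last p) = 1 := fun i => by simp [hXt]
  have hXb : ∀ (β : Fin p → ℝ) (β0 : ℝ) i,
      (Xt *ᵥ Fin.snoc β β0) i = ∑ j, x i j * β j + β0 := by
    intro β β0 i
    simp [mulVec, dotProduct, Fin.sum_univ_castSucc, hcol, hlast]
  have hgrad_eq : ∀ (β : Fin p → ℝ) (β0 : ℝ), grad (β, β0) =
      (fun j => smoothHingeGrad Xt y τ (Fin.snoc β β0) j.castSucc,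
        smoothHingeGrad Xt y τ (Fin.snoc β β0) (Fin.last p)) := by
    intro β β0
    simp [hgrad, smoothHingeGrad, smoothHingeWeight, vecMul, dotProduct, hXb, hcol, hlast,
      Finset.mul_sum]
  have hy_abs : ∀ i, |y i| = 1 := fun i => by rcases hy i with h | h <;> simp [h]
  have hnorm : ‖Xt‖ ^ 2 ≤ σmax := hσ ▸ Xt.l2_opNorm_sq_le_iSup_eigenvalues
  have hlip := norm_smoothHingeGrad_sub_le Xt hy_abs hτ (Fin.snoc β β0) (Fin.snoc β' β0')
  simp only [EuclideanSpace.norm_toLp_eq_sqrt_castSucc_last, Pi.sub_apply, Fin.snoc_castSucc,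
    Fin.snoc_last] at hlip
  rw [hgrad_eq, hgrad_eq]
  exact hlip.trans (by gcongr)
end
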